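/- Let T be a tree (dendroidally ordered set) and A any broad poset. A set map φ: T → A is a map of broad posets (i.e. preserves broad relations) if and only if φ(e^↑) ≤ φ(e) for each node or stump e ∈ T, where e^↑ is the maximal tuple strictly below e. Consequently, the broad relations of T are generated under broad transitivity and reflexivity by the relations e^↑ ≤ e. -/

import Mathlib

universe u

namespace BroadPaper

/-- A broad relation on `X`: a relation between finite unordered tuples
(multisets) over `X` and elements of `X`. -/
abbrev Rel (X : Type u) : Type u := Multiset X → X → Prop

variable {X : Type u} {Y : Type u} {A : Type u} {B : Type u} {Z : Type u}

/-- Broad transitivity: if `f₁ ⋯ fₙ ≤ e` and `g̲ᵢ ≤ fᵢ` then `g̲₁ ⋯ g̲ₙ ≤ e`,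
encoded via a multiset of pairs `(g̲ᵢ, fᵢ)`. -/
def BTrans (r : Rel X) : Prop :=
  ∀ (p : Multiset (Multiset X × X)) (e : X),
    r (p.map Prod.snd) e → (∀ q ∈ p, r q.1 q.2) → r ((p.map Prod.fst).sum) e

/-- A pre-broad poset: reflexivity plus broad transitivity. -/
def IsPreBroad (r : Rel X) : Prop := (∀ e : X, r {e} e) ∧ BTrans r

/-- A (commutative) broad poset: a pre-broad poset satisfying antisymmetry. -/
def IsBroad (r : Rel X) : Prop :=
  IsPreBroad r ∧ ∀ e f : X, r {e} f → r {f} e → e = f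

/-- Simplicity: letters in any broad relation are pairwise distinct. -/
def Simple (r : Rel X) : Prop := ∀ fs e, r fs e → fs.Nodup

/-- The descendant relation `f ≤_d e`. -/
def descends (r : Rel X) (f e : X) : Prop := ∃ fs, r fs e ∧ f ∈ fs

def Comparable (r : Rel X) (f g : X) : Prop := descends r f g ∨ descends r g f

def Incomp (r : Rel X) (f g : X) : Prop := ¬ descends r f g ∧ ¬ descends r g f

/-- Blockwise extension of a broad relation to a relation between tuples:
`fs ≤ es` iff `fs = f̲₁ ⋯ f̲ₖ`, `es = e₁ ⋯ eₖ` with `f̲ᵢ ≤ eᵢ`. -/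
def tupleLE (r : Rel X) (fs es : Multiset X) : Prop :=
  ∃ p : Multiset (Multiset X × X),
    p.map Prod.snd = es ∧ (p.map Prod.fst).sum = fs ∧ ∀ q ∈ p, r q.1 q.2

/-- A leaf: no tuple strictly below `e`. -/
def IsLeaf (r : Rel X) (e : X) : Prop := ¬ ∃ fs, r fs e ∧ fs ≠ ({e} : Multiset X)

/-- `fs` is the maximum tuple strictly below `e` (written `e^↑`).
If `fs ≠ 0`, `e` is a node; if `fs = 0`, `e` is a stump. -/
def upTuple (r : Rel X) (e : X) (fs : Multiset X) : Prop :=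
  (r fs e ∧ fs ≠ ({e} : Multiset X)) ∧
    ∀ gs, r gs e → gs ≠ ({e} : Multiset X) → tupleLE r gs fs

def IsStump (r : Rel X) (e : X) : Prop := upTuple r e 0

/-- A dendroidally ordered set (tree): a finite simple broad poset in which
every element is a leaf, node or stump, with a `≤_d`-maximum (root). -/
def IsTree (r : Rel X) : Prop :=
  IsBroad r ∧ Finite X ∧ Simple r ∧
    (∀ e : X, IsLeaf r e ∨ ∃ fs, upTuple r e fs) ∧
    ∃ rt : X, ∀ e, descends r e rt

def IsMaxEl (r : Rel X) (e : X) : Prop := ∀ s, descends r e s → s = e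

/-- A forestially ordered set (forest): each element has a unique
`≤_d`-maximal element above it. -/
def IsForest (r : Rel X) : Prop :=
  IsBroad r ∧ Finite X ∧ Simple r ∧
    (∀ e : X, IsLeaf r e ∨ ∃ fs, upTuple r e fs) ∧
    ∀ e : X, ∃! rt : X, IsMaxEl r rt ∧ descends r e rt

/-- A map of broad posets: preserves broad relations (letterwise on tuples). -/
def BroadHom (r : Rel X) (r' : Rel Y) (φ : X → Y) : Prop :=
  ∀ fs e, r fs e → r' (fs.map φ) (φ e)

/-- `rs` is the root tuple: the tuple of `≤_d`-maximal elements (no repeats). -/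
def IsRootTuple (r : Rel X) (rs : Multiset X) : Prop :=
  rs.Nodup ∧ ∀ x, x ∈ rs ↔ IsMaxEl r x

/-- Independent map of forests: `φ(r̲_F)·e̲ ≤ r̲_{F'}` for some tuple `e̲`. -/
def Independent (r : Rel X) (r' : Rel Y) (φ : X → Y) : Prop :=
  ∃ (rs : Multiset X) (rs' : Multiset Y) (es : Multiset Y),
    IsRootTuple r rs ∧ IsRootTuple r' rs' ∧ tupleLE r' (rs.map φ + es) rs'

/-- The (pre-)broad relation generated by a set of generating relations:
closure under reflexivity and broad transitivity. -/
inductive GenRel (gen : Rel X) : Rel X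
  | of : ∀ fs e, gen fs e → GenRel gen fs e
  | refl : ∀ e, GenRel gen {e} e
  | btrans : ∀ (p : Multiset (Multiset X × X)) (e : X),
      GenRel gen (p.map Prod.snd) e → (∀ q ∈ p, GenRel gen q.1 q.2) →
      GenRel gen ((p.map Prod.fst).sum) e

/-- Generators of the tensor product `S ⊗ T`: relations `s̲ × t ≤ (s,t)` and
`s × t̲ ≤ (s,t)`. -/
def tensorGen (rS : Rel A) (rT : Rel B) : Rel (A × B) := fun xs x =>
  (∃ as, rS as x.1 ∧ xs = as.map fun a => (a, x.2)) ∨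
  (∃ bs, rT bs x.2 ∧ xs = bs.map fun b => (x.1, b))

/-- The tensor product broad relation on `A × B`. -/
def tensorRel (rS : Rel A) (rT : Rel B) : Rel (A × B) := GenRel (tensorGen rS rT)

/-- Product of tuples: all pairs from `as` and `bs`. -/
def mprod (as : Multiset A) (bs : Multiset B) : Multiset (A × B) :=
  as.bind fun a => bs.map fun b => (a, b)

end BroadPaper

/-!
A relation `fs ≤ e` in a tree is either the identity `{e} ≤ e` or, by maximality of `e^↑`,
factors blockwise through `e^↑ ≤ e`; every letter of `e^↑` has strictly fewer descendants
than `e`, so induction on the number of descendants writes each relation as a composite of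
generators `e^↑ ≤ e`. Since the pullback of a broad poset along any map is again closed under
reflexivity and broad transitivity, preserving the generators then suffices.
-/

namespace BroadPaper

variable {X Y : Type u}

def Rel.comap (a : Rel Y) (φ : X → Y) : Rel X := fun fs e => a (fs.map φ) (φ e)

theorem IsPreBroad.comap {a : Rel Y} (ha : IsPreBroad a) (φ : X → Y) :
    IsPreBroad (a.comap φ) := by
  refine ⟨fun e => by simpa [Rel.comap] using ha.1 (φ e), fun p e hp hq => ?_⟩
  have h := ha.2 (p.map fun q => (q.1.map φ, φ q.2)) (φ e)
    (by simpa [Rel.comap, Multiset.map_map, Function.comp_def] using hp)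
    (by simp only [Multiset.mem_map]; rintro _ ⟨q, hq', rfl⟩; exact hq q hq')
  have hsum : ((p.map Prod.fst).sum).map φ = (p.map fun q => q.1.map φ).sum := by
    simpa [Multiset.map_map, Function.comp_def] using
      map_multiset_sum (Multiset.mapAddMonoidHom φ) (p.map Prod.fst)
  simpa [Rel.comap, hsum, Multiset.map_map, Function.comp_def] using h

theorem GenRel.le_of_isPreBroad {gen r : Rel X} (hr : IsPreBroad r)
    (hgen : ∀ fs e, gen fs e → r fs e) {fs : Multiset X} {e : X} (h : GenRel gen fs e) :
    r fs e := by
  induction h with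
  | of gs f hg => exact hgen gs f hg
  | refl f => exact hr.1 f
  | btrans p f _ _ ih₁ ih₂ => exact hr.2 p f ih₁ ih₂

namespace IsPreBroad

variable {r : Rel X} (hr : IsPreBroad r)
include hr

theorem subst [DecidableEq X] {us gs : Multiset X} {e f : X} (hus : r us e) (hf : f ∈ us)
    (hgs : r gs f) : r (gs + us.erase f) e := by
  let p : Multiset (Multiset X × X) := (gs, f) ::ₘ (us.erase f).map fun x => ({x}, x)
  have hsnd : p.map Prod.snd = us := by
    simpa [p, Multiset.map_map, Function.comp_def] using Multiset.cons_erase hf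
  have hfst : (p.map Prod.fst).sum = gs + us.erase f := by
    simp [p, Multiset.map_map, Multiset.sum_map_singleton]
  have hq : ∀ q ∈ p, r q.1 q.2 := by
    simp only [p, Multiset.mem_cons, Multiset.mem_map]
    rintro q (rfl | ⟨x, -, rfl⟩)
    exacts [hgs, hr.1 x]
  simpa [hfst] using hr.2 p e (hsnd ▸ hus) hq

theorem descends_trans {g f e : X} (hgf : descends r g f) (hfe : descends r f e) :
    descends r g e := by
  classical
  obtain ⟨gs, hgs, hg⟩ := hgf
  obtain ⟨us, hus, hf⟩ := hfe
  exact ⟨gs + us.erase f, hr.subst hus hf hgs, Multiset.mem_add.2 (Or.inl hg)⟩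

variable (hs : Simple r)
include hs

/-- Substituting the relation into itself at `e` would repeat every other letter. -/
theorem eq_singleton_of_mem {fs : Multiset X} {e : X} (h : r fs e) (he : e ∈ fs) :
    fs = {e} := by
  classical
  obtain ⟨-, -, hdisj⟩ := Multiset.nodup_add.1 (hs _ _ (hr.subst h he h))
  have herase : fs.erase e = 0 := Multiset.eq_zero_of_forall_notMem fun x hx =>
    Multiset.disjoint_left.1 hdisj (Multiset.mem_of_mem_erase hx) hx
  simpa [herase] using (Multiset.cons_erase he).symm

theorem ne_of_mem_upTuple {e f : X} {us : Multiset X} (hup : upTuple r e us) (hf : f ∈ us) :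
    f ≠ e := by
  rintro rfl
  exact hup.1.2 (hr.eq_singleton_of_mem hs hup.1.1 hf)

theorem descends_antisymm (hanti : ∀ e f : X, r {e} f → r {f} e → e = f) {f e : X}
    (hfe : descends r f e) (hef : descends r e f) : f = e := by
  classical
  obtain ⟨fs, hfs, hf⟩ := hfe
  obtain ⟨gs, hgs, he⟩ := hef
  have hsing : gs + fs.erase f = {e} :=
    hr.eq_singleton_of_mem hs (hr.subst hfs hf hgs) (Multiset.mem_add.2 (Or.inl he))
  have herase : fs.erase f = 0 := by
    have hcard := congrArg Multiset.card hsing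
    have hgs_pos : 0 < Multiset.card gs := Multiset.card_pos_iff_exists_mem.2 ⟨e, he⟩
    rw [Multiset.card_add, Multiset.card_singleton] at hcard
    exact Multiset.card_eq_zero.1 (by omega)
  have hfs1 : fs = {f} := by simpa [herase] using (Multiset.cons_erase hf).symm
  rw [herase, add_zero] at hsing
  subst hfs1 hsing
  exact (hanti e f hgs hfs).symm

end IsPreBroad

namespace IsBroad

variable {r : Rel X}

theorem ncard_descends_lt [Finite X] (hr : IsBroad r) (hs : Simple r) {f e : X}
    (hfe : descends r f e) (hne : f ≠ e) :
    {g | descends r g f}.ncard < {g | descends r g e}.ncard := by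
  refine Set.ncard_lt_ncard ⟨fun g hgf => hr.1.descends_trans hgf hfe, fun hsub => hne ?_⟩
  have hee : descends r e e := ⟨{e}, hr.1.1 e, Multiset.mem_singleton_self e⟩
  exact hr.1.descends_antisymm hs hr.2 hfe (hsub hee)

theorem genRel_upTuple_of_rel [Finite X] (hr : IsBroad r) (hs : Simple r)
    (hnodal : ∀ e : X, IsLeaf r e ∨ ∃ fs, upTuple r e fs)
    {fs : Multiset X} {e : X} (h : r fs e) : GenRel (fun gs f => upTuple r f gs) fs e := by
  by_cases hfs : fs = {e}
  · exact hfs ▸ GenRel.refl e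
  obtain ⟨us, hup⟩ := (hnodal e).resolve_left fun hleaf => hleaf ⟨fs, h, hfs⟩
  obtain ⟨p, hsnd, hfst, hp⟩ := hup.2 fs h hfs
  have hgen : ∀ q ∈ p, GenRel (fun gs f => upTuple r f gs) q.1 q.2 := fun q hq =>
    have hq₂ : q.2 ∈ us := hsnd ▸ Multiset.mem_map_of_mem Prod.snd hq
    genRel_upTuple_of_rel hr hs hnodal (hp q hq)
  exact hfst ▸ GenRel.btrans p e (hsnd ▸ GenRel.of us e hup) hgen
termination_by {g | descends r g e}.ncard
decreasing_by
  exact hr.ncard_descends_lt hs ⟨us, hup.1.1, hq₂⟩ (hr.1.ne_of_mem_upTuple hs hup hq₂)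

end IsBroad

/-- A set map from a tree to a broad poset is a broad poset
map iff it preserves the generating relations `e^↑ ≤ e`; consequently the
broad relations of a tree are generated (under reflexivity and broad
transitivity) by the relations `e^↑ ≤ e`. -/
theorem stmt3 {X Y : Type u} (r : Rel X) (a : Rel Y)
    (ht : IsTree r) (ha : IsBroad a) (φ : X → Y) :
    ((∀ fs e, r fs e → a (fs.map φ) (φ e)) ↔
      (∀ e fs, upTuple r e fs → a (fs.map φ) (φ e))) ∧
    (∀ fs e, r fs e ↔ (GenRel fun gs f => upTuple r f gs) fs e) := by
  obtain ⟨hr, hfin, hs, hnodal, -⟩ := ht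
  have hgen : ∀ fs e, r fs e ↔ (GenRel fun gs f => upTuple r f gs) fs e := fun _ _ =>
    ⟨hr.genRel_upTuple_of_rel hs hnodal, GenRel.le_of_isPreBroad hr.1 fun _ _ hup => hup.1.1⟩
  refine ⟨⟨fun hφ e fs hup => hφ fs e hup.1.1, fun hφ fs e h => ?_⟩, hgen⟩
  exact GenRel.le_of_isPreBroad (ha.1.comap φ) (fun gs f hup => hφ f gs hup)
    ((hgen fs e).1 h)

end BroadPaper
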